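/- Let G be a finite simple graph, let s = χ_DP(G), and let t be an integer with 1 ≤ t < s. Then α_t^{DP}(G) ≥ (t/s)·|V(G)| or α_{s−t}^{DP}(G) ≥ ((s−t)/s)·|V(G)|. -/

import Mathlib

open SimpleGraph

/-- `DPCover G H L` means `(L, H)` is a cover of the graph `G`:
(1) the sets `L u` partition `V(H)`; (2) each `H[L u]` is complete;
(3) for each edge `uv` of `G`, the edges of `H` between `L u` and `L v` form a matching;
(4) there are no edges of `H` between lists of distinct non-adjacent vertices. -/
structure DPCover {V : Type} (G : SimpleGraph V) {W : Type} (H : SimpleGraph W)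
    (L : V → Finset W) : Prop where
  partition : ∀ w : W, ∃! v : V, w ∈ L v
  cliques : ∀ v : V, ∀ a ∈ L v, ∀ b ∈ L v, a ≠ b → H.Adj a b
  matching : ∀ ⦃u v : V⦄, G.Adj u v → ∀ a ∈ L u, ∀ b ∈ L v, ∀ b' ∈ L v,
      H.Adj a b → H.Adj a b' → b = b'
  nonadj : ∀ ⦃u v : V⦄, u ≠ v → ¬ G.Adj u v → ∀ a ∈ L u, ∀ b ∈ L v, ¬ H.Adj a b

/-- A finset is independent in `H` if no two of its elements are adjacent. -/
def IsIndepFinset {W : Type} (H : SimpleGraph W) (S : Finset W) : Prop :=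
  ∀ a ∈ S, ∀ b ∈ S, ¬ H.Adj a b

/-- The independence number of `H`. -/
noncomputable def indepNum {W : Type} [Fintype W] (H : SimpleGraph W) : ℕ :=
  sSup {n : ℕ | ∃ S : Finset W, IsIndepFinset H S ∧ S.card = n}

/-- The DP-chromatic number of `G`: the least `m` such that every `m`-fold cover `(L, H)`
of `G` admits an `H`-coloring, i.e. an independent set in `H` of size `|V(G)|`. -/
noncomputable def chiDP {V : Type} [Fintype V] (G : SimpleGraph V) : ℕ :=
  sInf {m : ℕ | ∀ (W : Type) (_ : Fintype W) (H : SimpleGraph W) (L : V → Finset W),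
    DPCover G H L → (∀ v, (L v).card = m) →
    ∃ S : Finset W, IsIndepFinset H S ∧ S.card = Fintype.card V}

/-- The partial DP `t`-chromatic number of `G`: the minimum of the independence number
`α(H)` over all `t`-fold covers `(L, H)` of `G`. -/
noncomputable def alphaDP {V : Type} [Fintype V] (G : SimpleGraph V) (t : ℕ) : ℕ :=
  sInf {n : ℕ | ∃ (W : Type) (_ : Fintype W) (H : SimpleGraph W) (L : V → Finset W),
    DPCover G H L ∧ (∀ v, (L v).card = t) ∧ _root_.indepNum H = n}

/-- A graph `G` is partially DP-nice if `α_t^{DP}(G) ≥ t|V(G)|/χ_DP(G)` for all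
`t ∈ {1, …, χ_DP(G)}`. -/
def PartiallyDPNice {V : Type} [Fintype V] (G : SimpleGraph V) : Prop :=
  ∀ t : ℕ, 1 ≤ t → t ≤ chiDP G →
    (t * Fintype.card V : ℚ) / (chiDP G : ℚ) ≤ (alphaDP G t : ℚ)

/-!
Glue an optimal `t`-fold cover `(L, H)` and an optimal `(s - t)`-fold cover `(L', H')` of `G`
into an `s`-fold cover by taking the disjoint union of `H` and `H'` and joining every vertex
of `L v` to every vertex of `L' v`. Since `s = χ_DP(G)`, this cover has an independent
transversal; its two halves are independent in `H` and `H'`, so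
`|V(G)| ≤ α_t^{DP}(G) + α_{s-t}^{DP}(G)`, and the two ratios `t/s` and `(s - t)/s` add up to `1`.
-/

open Finset

lemma IsIndepFinset.card_le_indepNum {W : Type} [Fintype W] {H : SimpleGraph W} {S : Finset W}
    (hS : IsIndepFinset H S) : S.card ≤ _root_.indepNum H :=
  le_csSup ⟨Fintype.card W, by rintro n ⟨T, -, rfl⟩; exact T.card_le_univ⟩ ⟨S, hS, rfl⟩

-- `⊥ □ ⊤` is a disjoint union of copies of `K_t`, one for each vertex of `G`.
lemma exists_dpCover_card_eq {V : Type} [Fintype V] (G : SimpleGraph V) (t : ℕ) :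
    ∃ (W : Type) (_ : Fintype W) (H : SimpleGraph W) (L : V → Finset W),
      DPCover G H L ∧ ∀ v, (L v).card = t := by
  refine ⟨V × Fin t, inferInstance, ⊥ □ ⊤, fun v => {v} ×ˢ univ, ⟨?_, ?_, ?_, ?_⟩, by simp⟩
  all_goals simp only [mem_product, mem_singleton, mem_univ, and_true, boxProd_adj, bot_adj,
    top_adj, false_and, false_or]
  · exact fun w => ⟨w.1, rfl, fun _ => Eq.symm⟩
  · exact fun v a ha b hb hab =>
      ⟨fun h => hab (Prod.ext (ha.trans hb.symm) h), ha.trans hb.symm⟩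
  · rintro u v huv a rfl b rfl b' - ⟨-, h⟩
    exact absurd h huv.ne
  · rintro u v huv - a rfl b rfl ⟨-, h⟩
    exact huv h

lemma exists_dpCover_indepNum_eq_alphaDP {V : Type} [Fintype V] (G : SimpleGraph V) (t : ℕ) :
    ∃ (W : Type) (_ : Fintype W) (H : SimpleGraph W) (L : V → Finset W),
      DPCover G H L ∧ (∀ v, (L v).card = t) ∧ _root_.indepNum H = alphaDP G t := by
  obtain ⟨W, _, H, L, hc, hcard⟩ := exists_dpCover_card_eq G t
  exact Nat.sInf_mem (s := {n | ∃ (W : Type) (_ : Fintype W) (H : SimpleGraph W)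
    (L : V → Finset W), DPCover G H L ∧ (∀ v, (L v).card = t) ∧ _root_.indepNum H = n})
    ⟨_, W, inferInstance, H, L, hc, hcard, rfl⟩

-- As `sInf ∅ = 0`, a positive `chiDP G` is attained.
lemma exists_coloring_of_card_eq_chiDP {V : Type} [Fintype V] {G : SimpleGraph V}
    (hG : 0 < chiDP G) {W : Type} [Fintype W] {H : SimpleGraph W} {L : V → Finset W}
    (hc : DPCover G H L) (hcard : ∀ v, (L v).card = chiDP G) :
    ∃ S : Finset W, IsIndepFinset H S ∧ S.card = Fintype.card V :=
  Nat.sInf_mem (Nat.nonempty_of_pos_sInf hG) W inferInstance H L hc hcard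

def joinCover {V W W' : Type} (H : SimpleGraph W) (H' : SimpleGraph W')
    (L : V → Finset W) (L' : V → Finset W') : SimpleGraph (W ⊕ W') where
  Adj x y :=
    match x, y with
    | .inl a, .inl b => H.Adj a b
    | .inr a, .inr b => H'.Adj a b
    | .inl a, .inr b => ∃ v, a ∈ L v ∧ b ∈ L' v
    | .inr a, .inl b => ∃ v, b ∈ L v ∧ a ∈ L' v
  symm := ⟨by
    rintro (a | a) (b | b) h <;> first | exact H.adj_symm h | exact H'.adj_symm h | exact h⟩
  loopless := ⟨by rintro (a | a) h <;> first | exact H.irrefl h | exact H'.irrefl h⟩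

section joinCover

variable {V W W' : Type} {G : SimpleGraph V} {H : SimpleGraph W} {H' : SimpleGraph W'}
  {L : V → Finset W} {L' : V → Finset W'}

lemma DPCover.eq_of_joinCover_adj (hc : DPCover G H L) (hc' : DPCover G H' L') ⦃u v : V⦄
    ⦃a : W⦄ ⦃b : W'⦄ (ha : a ∈ L u) (hb : b ∈ L' v)
    (hab : (joinCover H H' L L').Adj (.inl a) (.inr b)) : u = v := by
  obtain ⟨x, hxa, hxb⟩ := hab
  exact ((hc.partition a).unique ha hxa).trans ((hc'.partition b).unique hxb hb)

lemma DPCover.joinCover (hc : DPCover G H L) (hc' : DPCover G H' L') :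
    DPCover G (joinCover H H' L L') (fun v => (L v).disjSum (L' v)) := by
  have owner_eq := hc.eq_of_joinCover_adj hc'
  constructor
  · rintro (a | a)
    · simpa using hc.partition a
    · simpa using hc'.partition a
  · rintro v (a | a) ha (b | b) hb hne <;> simp only [inl_mem_disjSum, inr_mem_disjSum] at ha hb
    · exact hc.cliques v a ha b hb (by rintro rfl; exact hne rfl)
    · exact ⟨v, ha, hb⟩
    · exact ⟨v, hb, ha⟩
    · exact hc'.cliques v a ha b hb (by rintro rfl; exact hne rfl)
  · rintro u v huv (a | a) ha (b | b) hb (b' | b') hb' hab hab' <;>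
      simp only [inl_mem_disjSum, inr_mem_disjSum] at ha hb hb'
    all_goals first
      | exact congrArg Sum.inl (hc.matching huv a ha b hb b' hb' hab hab')
      | exact congrArg Sum.inr (hc'.matching huv a ha b hb b' hb' hab hab')
      | exact (huv.ne (owner_eq ha hb hab)).elim
      | exact (huv.ne (owner_eq ha hb' hab')).elim
      | exact (huv.ne' (owner_eq hb ha hab.symm)).elim
      | exact (huv.ne' (owner_eq hb' ha hab'.symm)).elim
  · rintro u v huv hG (a | a) ha (b | b) hb hab <;>
      simp only [inl_mem_disjSum, inr_mem_disjSum] at ha hb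
    · exact hc.nonadj huv hG a ha b hb hab
    · exact huv (owner_eq ha hb hab)
    · exact huv (owner_eq hb ha hab.symm).symm
    · exact hc'.nonadj huv hG a ha b hb hab

end joinCover

lemma card_le_alphaDP_add_alphaDP {V : Type} [Fintype V] (G : SimpleGraph V) {a b : ℕ}
    (hab : a + b = chiDP G) (hG : 0 < chiDP G) :
    Fintype.card V ≤ alphaDP G a + alphaDP G b := by
  obtain ⟨W, _, H, L, hc, hcard, hα⟩ := exists_dpCover_indepNum_eq_alphaDP G a
  obtain ⟨W', _, H', L', hc', hcard', hα'⟩ := exists_dpCover_indepNum_eq_alphaDP G b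
  obtain ⟨S, hS, hScard⟩ := exists_coloring_of_card_eq_chiDP hG (hc.joinCover hc')
    (fun v => by rw [card_disjSum, hcard, hcard', hab])
  have hleft : IsIndepFinset H S.toLeft := fun x hx y hy =>
    hS _ (mem_toLeft.mp hx) _ (mem_toLeft.mp hy)
  have hright : IsIndepFinset H' S.toRight := fun x hx y hy =>
    hS _ (mem_toRight.mp hx) _ (mem_toRight.mp hy)
  calc Fintype.card V = S.toLeft.card + S.toRight.card := by
        rw [card_toLeft_add_card_toRight, hScard]
    _ ≤ alphaDP G a + alphaDP G b := by
      rw [← hα, ← hα']; exact add_le_add hleft.card_le_indepNum hright.card_le_indepNum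

lemma div_mul_le_or_div_mul_le {K : Type*} [Field K] [LinearOrder K] [IsStrictOrderedRing K]
    {a b s n x y : K} (hn : n ≤ x + y) (hab : a + b = s) (hs : 0 < s) :
    a / s * n ≤ x ∨ b / s * n ≤ y := by
  by_contra! h
  have : a / s * n + b / s * n = n := by
    rw [← add_mul, ← add_div, hab, div_self hs.ne', one_mul]
  linarith [h.1, h.2]

theorem alphaDP_or_alphaDP_compl_general {V : Type} [Fintype V] (G : SimpleGraph V)
    (t : ℕ) (h2 : t < chiDP G) :
    ((t : ℚ) / (chiDP G : ℚ)) * (Fintype.card V : ℚ) ≤ (alphaDP G t : ℚ) ∨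
    (((chiDP G - t : ℕ) : ℚ) / (chiDP G : ℚ)) * (Fintype.card V : ℚ) ≤
      (alphaDP G (chiDP G - t) : ℚ) := by
  have hG : 0 < chiDP G := by omega
  have hsplit : t + (chiDP G - t) = chiDP G := Nat.add_sub_cancel' h2.le
  refine div_mul_le_or_div_mul_le ?_ (by exact_mod_cast hsplit) (by exact_mod_cast hG)
  exact_mod_cast card_le_alphaDP_add_alphaDP G hsplit hG

/-- For `1 ≤ t < s = χ_DP(G)`, either `α_t^{DP}(G) ≥ (t/s)|V(G)|` or
`α_{s−t}^{DP}(G) ≥ ((s−t)/s)|V(G)|`. -/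
theorem alphaDP_or_alphaDP_compl {V : Type} [Fintype V] (G : SimpleGraph V)
    (t : ℕ) (h1 : 1 ≤ t) (h2 : t < chiDP G) :
    ((t : ℚ) / (chiDP G : ℚ)) * (Fintype.card V : ℚ) ≤ (alphaDP G t : ℚ) ∨
    (((chiDP G - t : ℕ) : ℚ) / (chiDP G : ℚ)) * (Fintype.card V : ℚ) ≤
      (alphaDP G (chiDP G - t) : ℚ) :=
  alphaDP_or_alphaDP_compl_general G t h2
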